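/- Let T be a bounded linear operator on H^p (1 ≤ p < ∞), and let B_I, B_{I'} be disjoint finite collections of pairwise disjoint dyadic intervals, each interval of measure at most α. For random signs θ set b_I^θ = Σ_{K∈B_I} θ_K h_K and Y(θ) = ⟨T b_I^θ, b_{I'}^θ⟩. Then E[Y²] ≤ ‖T‖² α^{1/2}. -/

import Mathlib

open MeasureTheory

/-- The dyadic interval `[(k-1)/2^n, k/2^n)`, encoded by the pair `K = (n, k)`. -/
def dyadicSet (K : ℕ × ℕ) : Set ℝ := Set.Ico ((K.2 - 1 : ℝ) / 2 ^ K.1) ((K.2 : ℝ) / 2 ^ K.1)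

/-- `(n, k)` encodes a genuine dyadic interval of `[0,1)` iff `1 ≤ k ≤ 2^n`. -/
def IsDyadic (K : ℕ × ℕ) : Prop := 1 ≤ K.2 ∧ K.2 ≤ 2 ^ K.1

/-- The `L^∞`-normalized Haar function `h_I = χ_{I^+} - χ_{I^-}` of the dyadic interval
encoded by `K = (n, k)`. -/
noncomputable def haar (K : ℕ × ℕ) : ℝ → ℝ := fun x =>
  (Set.Ico ((2 * K.2 - 2 : ℝ) / 2 ^ (K.1 + 1)) ((2 * K.2 - 1 : ℝ) / 2 ^ (K.1 + 1))).indicator 1 x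
  - (Set.Ico ((2 * K.2 - 1 : ℝ) / 2 ^ (K.1 + 1)) ((2 * K.2 : ℝ) / 2 ^ (K.1 + 1))).indicator 1 x

open ProbabilityTheory

/-- The function `Σ_{K ∈ 𝒟} c_K h_K` determined by a coefficient vector `c` on a finite
index set `𝒟` of dyadic intervals. -/
noncomputable def haarFn (𝒟 : Finset (ℕ × ℕ)) (c : ℕ × ℕ → ℝ) : ℝ → ℝ :=
  fun x => ∑ K ∈ 𝒟, c K * haar K x

/-- The `H^p` square-function norm of `Σ_{K ∈ 𝒟} c_K h_K`. -/
noncomputable def HpNorm (𝒟 : Finset (ℕ × ℕ)) (p : ℝ) (c : ℕ × ℕ → ℝ) : ℝ :=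
  (∫ x in (0:ℝ)..1, (∑ K ∈ 𝒟, (c K * haar K x) ^ 2) ^ (p / 2)) ^ (1 / p)

/-!
Expanding in the Haar basis, `Y = Σ_{K ∈ B_I, L ∈ B_{I'}} θ_K θ_L t_{KL}` with
`t_{KL} = ⟨T h_K, h_L⟩`. As `B_I` and `B_{I'}` are disjoint, the products `θ_K θ_L` are
orthonormal, so `E[Y²] = Σ t_{KL}²`; each inner sum is itself the second moment of a Rademacher
sum, so it suffices to bound `Σ_L (Σ_K ε_K t_{KL})²` (if `p ≥ 2`), resp. `Σ_K (Σ_L ε_L t_{KL})²`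
(if `p ≤ 2`), uniformly in the signs `ε`.

On a pairwise disjoint family the square function of a signed sum is at most `1`, and the `H^p`
norm is a weighted `ℓ^p` norm with weights `|K| ≤ β := min α 1` of total mass at most `1`.
For `p ≥ 2`, Hölder's inequality bounds the first sum by `β ‖T b^ε‖² ≤ ‖T‖² β`. For `p ≤ 2`,
testing `T` against the signed sum bounds the second sum `s` by `‖T‖ (β s)^{1/2}`, so again
`s ≤ ‖T‖² β`. Finally `β ≤ α^{1/2}`.
-/

open Set
open scoped ENNReal

theorem Real.rpow_sum_of_pairwise_mul_eq_zero {ι : Type*} {s : Finset ι} {g : ι → ℝ}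
    (hs : (s : Set ι).Pairwise fun i j => g i * g j = 0) {r : ℝ} (hr : 0 < r) :
    (∑ i ∈ s, g i) ^ r = ∑ i ∈ s, g i ^ r := by
  by_cases h : ∃ i ∈ s, g i ≠ 0
  · obtain ⟨i, hi, hgi⟩ := h
    have hzero : ∀ j ∈ s, j ≠ i → g j = 0 := fun j hj hji =>
      (mul_eq_zero.1 (hs hi hj hji.symm)).resolve_left hgi
    rw [Finset.sum_eq_single_of_mem i hi hzero, Finset.sum_eq_single_of_mem i hi fun j hj hji => by
      rw [hzero j hj hji, Real.zero_rpow hr.ne']]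
  · push Not at h
    rw [Finset.sum_eq_zero h, Finset.sum_eq_zero fun i hi => by rw [h i hi, Real.zero_rpow hr.ne'],
      Real.zero_rpow hr.ne']

theorem integral_le_rpow_integral_rpow {α : Type*} [MeasurableSpace α] {μ : Measure α}
    [IsProbabilityMeasure μ] {p : ℝ} (hp : 1 ≤ p) {u : α → ℝ} (hu0 : ∀ x, 0 ≤ u x)
    (hu : Integrable u μ) (hup : Integrable (fun x => u x ^ p) μ) :
    ∫ x, u x ∂μ ≤ (∫ x, u x ^ p ∂μ) ^ (1 / p) := by
  have hJ : (∫ x, u x ∂μ) ^ p ≤ ∫ x, u x ^ p ∂μ :=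
    (convexOn_rpow hp).map_integral_le (Real.continuous_rpow_const (by linarith)).continuousOn
      isClosed_Ici (ae_of_all _ hu0) hu hup
  calc ∫ x, u x ∂μ = ((∫ x, u x ∂μ) ^ p) ^ (1 / p) := by
        rw [one_div, Real.rpow_rpow_inv (integral_nonneg hu0) (by linarith)]
    _ ≤ _ := Real.rpow_le_rpow (Real.rpow_nonneg (integral_nonneg hu0) _) hJ (by positivity)

section WeightedSums

variable {ι : Type*} {s : Finset ι} {w : ι → ℝ} {p β : ℝ}

theorem sum_mul_le_rpow_sum_rpow_mul {r : ℝ} (hr : 1 ≤ r) (hw : ∀ i, 0 ≤ w i)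
    (hw1 : ∑ i ∈ s, w i ≤ 1) {f : ι → ℝ} (hf : ∀ i, 0 ≤ f i) :
    ∑ i ∈ s, f i * w i ≤ (∑ i ∈ s, f i ^ r * w i) ^ (1 / r) := by
  simp_rw [mul_comm _ (w _)]
  refine (Real.inner_le_weight_mul_Lp_of_nonneg s hr w f hw hf).trans ?_
  rw [one_div]
  refine mul_le_of_le_one_left (Real.rpow_nonneg (Finset.sum_nonneg fun i _ =>
    mul_nonneg (hw i) (Real.rpow_nonneg (hf i) _)) _) ?_
  exact Real.rpow_le_one (Finset.sum_nonneg fun i _ => hw i) hw1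
    (sub_nonneg.2 (inv_le_one_of_one_le₀ hr))

theorem sum_sq_mul_le_of_two_le (hp : 2 ≤ p) (hβ : 0 ≤ β) (hw : ∀ i, 0 ≤ w i)
    (hwβ : ∀ i ∈ s, w i ≤ β) (hw1 : ∑ i ∈ s, w i ≤ 1) (d : ι → ℝ) :
    ∑ i ∈ s, (d i * w i) ^ 2 ≤ β * (∑ i ∈ s, |d i| ^ p * w i) ^ (2 / p) := by
  have hpow : ∀ i, (d i ^ 2) ^ (p / 2) = |d i| ^ p := fun i => by
    rw [← sq_abs, ← Real.rpow_natCast, ← Real.rpow_mul (abs_nonneg _)]; norm_num [mul_div_cancel₀]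
  calc ∑ i ∈ s, (d i * w i) ^ 2 ≤ ∑ i ∈ s, β * (d i ^ 2 * w i) :=
        Finset.sum_le_sum fun i hi => by
          rw [mul_pow, sq (w i), ← mul_assoc, mul_comm β]
          exact mul_le_mul_of_nonneg_left (hwβ i hi) (mul_nonneg (sq_nonneg _) (hw i))
    _ ≤ β * (∑ i ∈ s, (d i ^ 2) ^ (p / 2) * w i) ^ (1 / (p / 2)) := by
        rw [← Finset.mul_sum]
        gcongr
        exact sum_mul_le_rpow_sum_rpow_mul (by linarith) hw hw1 fun i => sq_nonneg _
    _ = β * (∑ i ∈ s, |d i| ^ p * w i) ^ (2 / p) := by simp_rw [hpow, one_div_div]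

theorem sum_rpow_mul_le_of_le_two (hp0 : 0 < p) (hp : p ≤ 2) (hw : ∀ i, 0 ≤ w i)
    (hwβ : ∀ i ∈ s, w i ≤ β) (hw1 : ∑ i ∈ s, w i ≤ 1) (a : ι → ℝ) :
    ∑ i ∈ s, |a i| ^ p * w i ≤ (β * ∑ i ∈ s, a i ^ 2) ^ (p / 2) := by
  have hpow : ∀ i, (|a i| ^ p) ^ (2 / p) = a i ^ 2 := fun i => by
    rw [← Real.rpow_mul (abs_nonneg _), mul_div_cancel₀ _ hp0.ne', Real.rpow_two, sq_abs]
  calc ∑ i ∈ s, |a i| ^ p * w i ≤ (∑ i ∈ s, (|a i| ^ p) ^ (2 / p) * w i) ^ (1 / (2 / p)) :=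
        sum_mul_le_rpow_sum_rpow_mul ((one_le_div hp0).2 hp) hw hw1
          fun i => Real.rpow_nonneg (abs_nonneg _) _
    _ ≤ (β * ∑ i ∈ s, a i ^ 2) ^ (p / 2) := by
        rw [one_div_div]
        refine Real.rpow_le_rpow (Finset.sum_nonneg fun i _ => ?_) ?_ (by positivity)
        · rw [hpow]; exact mul_nonneg (sq_nonneg _) (hw i)
        · rw [Finset.mul_sum]
          exact Finset.sum_le_sum fun i hi => by
            rw [hpow, mul_comm β]; exact mul_le_mul_of_nonneg_left (hwβ i hi) (sq_nonneg _)

end WeightedSums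

theorem le_sq_mul_of_le_mul_sqrt {s C β : ℝ} (hs : 0 ≤ s) (hβ : 0 ≤ β)
    (h : s ≤ C * √(β * s)) : s ≤ C ^ 2 * β := by
  have hsq : s * s ≤ C ^ 2 * β * s := by
    calc s * s ≤ (C * √(β * s)) ^ 2 := by nlinarith
      _ = C ^ 2 * β * s := by rw [mul_pow, Real.sq_sqrt (mul_nonneg hβ hs)]; ring
  rcases hs.eq_or_lt with rfl | hpos
  · positivity
  · exact le_of_mul_le_mul_right hsq hpos

theorem min_one_le_sqrt {α : ℝ} (hα : 0 ≤ α) : min α 1 ≤ √α := by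
  rw [Real.le_sqrt (le_min hα zero_le_one) hα]
  nlinarith [min_le_left α 1, min_le_right α 1, le_min hα zero_le_one]

section Rademacher

variable {Ω : Type*} [MeasurableSpace Ω] {P : Measure Ω}

theorem ae_eq_one_or_eq_neg_one_of_map_eq {X : Ω → ℝ} (hX : Measurable X)
    (hlaw : P.map X = (2⁻¹ : ℝ≥0∞) • Measure.dirac 1 + (2⁻¹ : ℝ≥0∞) • Measure.dirac (-1)) :
    ∀ᵐ ω ∂P, X ω = 1 ∨ X ω = -1 := by
  have hS : MeasurableSet ({1, -1} : Set ℝ) := (measurableSet_singleton _).insert _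
  rw [ae_iff, show {ω | ¬(X ω = 1 ∨ X ω = -1)} = X ⁻¹' {1, -1}ᶜ by ext; simp,
    ← Measure.map_apply hX hS.compl, hlaw]
  simp [Measure.dirac_apply' _ hS.compl]

theorem integral_eq_zero_of_map_eq {X : Ω → ℝ} (hX : Measurable X)
    (hlaw : P.map X = (2⁻¹ : ℝ≥0∞) • Measure.dirac 1 + (2⁻¹ : ℝ≥0∞) • Measure.dirac (-1)) :
    ∫ ω, X ω ∂P = 0 := by
  rw [← integral_map (f := fun y : ℝ => y) hX.aemeasurable aestronglyMeasurable_id, hlaw,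
    integral_add_measure ((integrable_dirac (by simp)).smul_measure (by simp))
      ((integrable_dirac (by simp)).smul_measure (by simp))]
  simp

theorem memLp_top_of_ae_eq_one_or_eq_neg_one {X : Ω → ℝ} (hX : Measurable X)
    (hsign : ∀ᵐ ω ∂P, X ω = 1 ∨ X ω = -1) : MemLp X ⊤ P :=
  memLp_top_of_bound hX.aestronglyMeasurable 1 (by
    filter_upwards [hsign] with ω h
    rcases h with h | h <;> simp [h])

theorem integral_sq_sum_of_orthonormal {κ : Type*} [DecidableEq κ] {s : Finset κ} {f : κ → Ω → ℝ}
    (hf : ∀ z ∈ s, MemLp (f z) 2 P)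
    (horth : ∀ z ∈ s, ∀ z' ∈ s, ∫ ω, f z ω * f z' ω ∂P = if z = z' then 1 else 0)
    (a : κ → ℝ) : ∫ ω, (∑ z ∈ s, f z ω * a z) ^ 2 ∂P = ∑ z ∈ s, a z ^ 2 := by
  have hint : ∀ z ∈ s, ∀ z' ∈ s, Integrable (fun ω => a z * a z' * (f z ω * f z' ω)) P :=
    fun z hz z' hz' => ((hf z hz).integrable_mul (hf z' hz')).const_mul _
  simp_rw [sq, Finset.sum_mul_sum, mul_mul_mul_comm _ (a _), mul_comm (f _ _ * f _ _)]
  rw [integral_finsetSum _ fun z hz => integrable_finsetSum _ fun z' hz' => hint z hz z' hz']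
  refine Finset.sum_congr rfl fun z hz => ?_
  rw [integral_finsetSum _ fun z' hz' => hint z hz z' hz', Finset.sum_eq_single_of_mem z hz]
  · rw [integral_const_mul, horth z hz z hz, if_pos rfl, mul_one]
  · intro z' hz' hne
    rw [integral_const_mul, horth z hz z' hz', if_neg hne.symm, mul_zero]

variable [IsProbabilityMeasure P] {ι : Type*} [DecidableEq ι] {θ : ι → Ω → ℝ}

theorem integral_mul_eq_ite_of_iIndepFun (hmeas : ∀ k, Measurable (θ k)) (hindep : iIndepFun θ P)
    (hsign : ∀ k, ∀ᵐ ω ∂P, θ k ω = 1 ∨ θ k ω = -1) (hmean : ∀ k, ∫ ω, θ k ω ∂P = 0) (i j : ι) :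
    ∫ ω, θ i ω * θ j ω ∂P = if i = j then 1 else 0 := by
  split_ifs with h
  · subst h
    rw [integral_congr_ae (g := fun _ => 1) (by
      filter_upwards [hsign i] with ω h
      rcases h with h | h <;> simp [h])]
    simp
  · exact ((hindep.indepFun h).integral_mul_eq_mul_integral (hmeas i).aestronglyMeasurable
      (hmeas j).aestronglyMeasurable).trans (by rw [hmean i, zero_mul])

theorem integral_sq_sum_mul_of_iIndepFun (hmeas : ∀ k, Measurable (θ k))
    (hindep : iIndepFun θ P) (hsign : ∀ k, ∀ᵐ ω ∂P, θ k ω = 1 ∨ θ k ω = -1)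
    (hmean : ∀ k, ∫ ω, θ k ω ∂P = 0) (s : Finset ι) (v : ι → ℝ) :
    ∫ ω, (∑ k ∈ s, θ k ω * v k) ^ 2 ∂P = ∑ k ∈ s, v k ^ 2 :=
  integral_sq_sum_of_orthonormal
    (fun k _ => (memLp_top_of_ae_eq_one_or_eq_neg_one (hmeas k) (hsign k)).mono_exponent le_top)
    (fun i _ j _ => integral_mul_eq_ite_of_iIndepFun hmeas hindep hsign hmean i j) v

theorem integral_sq_sum_sum_mul_mul_of_iIndepFun (hmeas : ∀ k, Measurable (θ k))
    (hindep : iIndepFun θ P) (hsign : ∀ k, ∀ᵐ ω ∂P, θ k ω = 1 ∨ θ k ω = -1)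
    (hmean : ∀ k, ∫ ω, θ k ω ∂P = 0) {B B' : Finset ι} (hBB' : Disjoint B B') (m : ι → ι → ℝ) :
    ∫ ω, (∑ i ∈ B, ∑ j ∈ B', θ i ω * θ j ω * m i j) ^ 2 ∂P = ∑ i ∈ B, ∑ j ∈ B', m i j ^ 2 := by
  have hne : ∀ i ∈ B, ∀ j ∈ B', i ≠ j := fun i hi j hj h =>
    Finset.disjoint_left.1 hBB' hi (h ▸ hj)
  simp_rw [← Finset.sum_product']
  refine integral_sq_sum_of_orthonormal (f := fun z ω => θ z.1 ω * θ z.2 ω)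
    (fun (z : ι × ι) _ => ?_) (fun z hz z' hz' => ?_) (fun z => m z.1 z.2)
  · exact ((memLp_top_of_ae_eq_one_or_eq_neg_one (hmeas z.2) (hsign z.2)).mul
      (memLp_top_of_ae_eq_one_or_eq_neg_one (hmeas z.1) (hsign z.1))).mono_exponent le_top
  obtain ⟨hi, hj⟩ := Finset.mem_product.1 hz
  obtain ⟨hi', hj'⟩ := Finset.mem_product.1 hz'
  have hindep4 := hindep.indepFun_mul_mul hmeas z.1 z'.1 z.2 z'.2
    (hne _ hi _ hj) (hne _ hi _ hj') (hne _ hi' _ hj) (hne _ hi' _ hj')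
  calc ∫ ω, θ z.1 ω * θ z.2 ω * (θ z'.1 ω * θ z'.2 ω) ∂P
      = ∫ ω, (θ z.1 * θ z'.1) ω * (θ z.2 * θ z'.2) ω ∂P := by
        congr 1; ext ω; simp only [Pi.mul_apply]; ring
    _ = (∫ ω, θ z.1 ω * θ z'.1 ω ∂P) * ∫ ω, θ z.2 ω * θ z'.2 ω ∂P :=
        hindep4.integral_mul_eq_mul_integral ((hmeas _).mul (hmeas _)).aestronglyMeasurable
          ((hmeas _).mul (hmeas _)).aestronglyMeasurable
    _ = if z = z' then 1 else 0 := by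
        simp_rw [integral_mul_eq_ite_of_iIndepFun hmeas hindep hsign hmean, Prod.ext_iff]
        split_ifs <;> simp_all

theorem sum_sum_sq_le_of_forall_abs_le_one (hmeas : ∀ k, Measurable (θ k))
    (hindep : iIndepFun θ P) (hsign : ∀ k, ∀ᵐ ω ∂P, θ k ω = 1 ∨ θ k ω = -1)
    (hmean : ∀ k, ∫ ω, θ k ω ∂P = 0) {α : Type*} (A : Finset α) (B : Finset ι)
    (v : α → ι → ℝ) {M : ℝ}
    (h : ∀ ε : ι → ℝ, (∀ k ∈ B, |ε k| ≤ 1) → ∑ a ∈ A, (∑ k ∈ B, ε k * v a k) ^ 2 ≤ M) :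
    ∑ a ∈ A, ∑ k ∈ B, v a k ^ 2 ≤ M := by
  -- `θ` only serves to average `h` over sign vectors: `Σ_k v a k ^ 2 = E (Σ_k θ_k v a k) ^ 2`.
  have hsignB : ∀ᵐ ω ∂P, ∀ k ∈ B, |θ k ω| ≤ 1 :=
    (ae_ball_iff B.countable_toSet).2 fun k _ => by
      filter_upwards [hsign k] with ω h
      rcases h with h | h <;> simp [h]
  have hint : ∀ a, Integrable (fun ω => (∑ k ∈ B, θ k ω * v a k) ^ 2) P := fun a =>
    (memLp_finsetSum B fun k _ =>
      ((memLp_top_of_ae_eq_one_or_eq_neg_one (hmeas k) (hsign k)).mono_exponent le_top).mul_const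
        (v a k)).integrable_sq
  calc ∑ a ∈ A, ∑ k ∈ B, v a k ^ 2 = ∫ ω, ∑ a ∈ A, (∑ k ∈ B, θ k ω * v a k) ^ 2 ∂P := by
        rw [integral_finsetSum _ fun a _ => hint a]
        simp_rw [integral_sq_sum_mul_of_iIndepFun hmeas hindep hsign hmean]
    _ ≤ ∫ _, M ∂P := integral_mono_ae (integrable_finsetSum _ fun a _ => hint a)
        (integrable_const M) (by filter_upwards [hsignB] with ω hω using h _ hω)
    _ = M := by simp

end Rademacher

theorem mem_Ico_div_two_pow_iff {x : ℝ} {z : ℤ} {n : ℕ} {a b : ℝ} (ha : a = z) (hb : b = z + 1) :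
    x ∈ Ico (a / 2 ^ n) (b / 2 ^ n) ↔ ⌊x * 2 ^ n⌋ = z := by
  subst ha hb
  rw [Int.floor_eq_iff, mem_Ico, div_le_iff₀ (by positivity), lt_div_iff₀ (by positivity)]

theorem mem_dyadicSet_iff {K : ℕ × ℕ} {x : ℝ} : x ∈ dyadicSet K ↔ ⌊x * 2 ^ K.1⌋ = K.2 - 1 :=
  mem_Ico_div_two_pow_iff (by push_cast; ring) (by push_cast; ring)

theorem haar_apply (K : ℕ × ℕ) (x : ℝ) :
    haar K x = if ⌊x * 2 ^ (K.1 + 1)⌋ = 2 * K.2 - 2 then 1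
      else if ⌊x * 2 ^ (K.1 + 1)⌋ = 2 * K.2 - 1 then -1 else 0 := by
  have hl : x ∈ Ico ((2 * K.2 - 2 : ℝ) / 2 ^ (K.1 + 1)) ((2 * K.2 - 1 : ℝ) / 2 ^ (K.1 + 1)) ↔
      ⌊x * 2 ^ (K.1 + 1)⌋ = 2 * K.2 - 2 :=
    mem_Ico_div_two_pow_iff (by push_cast; ring) (by push_cast; ring)
  have hr : x ∈ Ico ((2 * K.2 - 1 : ℝ) / 2 ^ (K.1 + 1)) ((2 * K.2 : ℝ) / 2 ^ (K.1 + 1)) ↔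
      ⌊x * 2 ^ (K.1 + 1)⌋ = 2 * K.2 - 1 :=
    mem_Ico_div_two_pow_iff (by push_cast; ring) (by push_cast; ring)
  simp only [haar, indicator_apply, Pi.one_apply, hl, hr]
  split_ifs <;> first | omega | norm_num

theorem floor_mul_two_pow_of_le {m n : ℕ} (hmn : m ≤ n) (x : ℝ) :
    ⌊x * 2 ^ m⌋ = ⌊x * 2 ^ n⌋ / 2 ^ (n - m) := by
  have h : x * 2 ^ m = x * 2 ^ n / ((2 ^ (n - m) : ℕ) : ℝ) := by
    rw [eq_div_iff (by positivity), Nat.cast_pow, Nat.cast_ofNat, mul_assoc, ← pow_add,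
      Nat.add_sub_cancel' hmn]
  rw [h, Int.floor_div_natCast]
  push_cast; rfl

theorem haar_sq (K : ℕ × ℕ) (x : ℝ) : haar K x ^ 2 = (dyadicSet K).indicator 1 x := by
  classical
  have h := floor_mul_two_pow_of_le (Nat.le_add_right K.1 1) x
  rw [Nat.add_sub_cancel_left, pow_one] at h
  rw [haar_apply, indicator_apply, mem_dyadicSet_iff, h]
  split_ifs <;> first | omega | norm_num

theorem haar_eq_of_floor_eq {K : ℕ × ℕ} {n : ℕ} (hn : K.1 < n) {x y : ℝ}
    (hxy : ⌊x * 2 ^ n⌋ = ⌊y * 2 ^ n⌋) : haar K x = haar K y := by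
  rw [haar_apply, haar_apply, floor_mul_two_pow_of_le hn x, floor_mul_two_pow_of_le hn y, hxy]

theorem abs_haar_le_one (K : ℕ × ℕ) (x : ℝ) : |haar K x| ≤ 1 := by
  rw [← sq_le_one_iff_abs_le_one, haar_sq]
  exact indicator_le_self' (fun _ _ => zero_le_one) x

theorem haar_eq_zero_of_notMem {K : ℕ × ℕ} {x : ℝ} (hx : x ∉ dyadicSet K) : haar K x = 0 := by
  simpa [indicator_of_notMem hx] using haar_sq K x

theorem measurable_haar (K : ℕ × ℕ) : Measurable (haar K) :=
  (measurable_const.indicator measurableSet_Ico).sub (measurable_const.indicator measurableSet_Ico)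

instance : IsProbabilityMeasure (volume.restrict (Icc (0:ℝ) 1)) := ⟨by simp⟩

theorem intervalIntegral_zero_one_eq_setIntegral_Icc (f : ℝ → ℝ) :
    ∫ x in (0:ℝ)..1, f x = ∫ x in Icc 0 1, f x := by
  rw [intervalIntegral.integral_of_le zero_le_one, integral_Icc_eq_integral_Ioc]

theorem Ico_div_two_pow_subset_Icc {a b : ℝ} {n : ℕ} (ha : 0 ≤ a) (hb : b ≤ 2 ^ n) :
    Ico (a / 2 ^ n) (b / 2 ^ n) ⊆ Icc 0 1 :=
  Ico_subset_Icc_self.trans (Icc_subset_Icc (by positivity) ((div_le_one (by positivity)).2 hb))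

theorem setIntegral_indicator_one_of_subset_Icc {s : Set ℝ} (hs : MeasurableSet s)
    (hsub : s ⊆ Icc 0 1) : ∫ x in Icc (0:ℝ) 1, s.indicator 1 x = volume.real s := by
  rw [integral_indicator_one hs, measureReal_restrict_apply hs, inter_eq_left.2 hsub]

theorem dyadicSet_subset_Icc {K : ℕ × ℕ} (hK : IsDyadic K) : dyadicSet K ⊆ Icc 0 1 :=
  Ico_div_two_pow_subset_Icc (by linarith [show (1:ℝ) ≤ K.2 by exact_mod_cast hK.1])
    (by exact_mod_cast hK.2)

theorem volume_real_dyadicSet_le_one {K : ℕ × ℕ} (hK : IsDyadic K) :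
    volume.real (dyadicSet K) ≤ 1 :=
  (measureReal_mono (dyadicSet_subset_Icc hK) measure_Icc_lt_top.ne).trans_eq (by simp)

theorem sum_volume_real_dyadicSet_le_one {B : Finset (ℕ × ℕ)} (hB : ∀ K ∈ B, IsDyadic K)
    (hdisj : (B : Set (ℕ × ℕ)).PairwiseDisjoint dyadicSet) :
    ∑ K ∈ B, volume.real (dyadicSet K) ≤ 1 := by
  rw [← measureReal_biUnion_finset hdisj (fun K _ => measurableSet_Ico)
    fun K _ => measure_Ico_lt_top.ne]
  calc volume.real (⋃ K ∈ B, dyadicSet K) ≤ volume.real (Icc (0:ℝ) 1) :=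
        measureReal_mono (iUnion₂_subset fun K hK => dyadicSet_subset_Icc (hB K hK))
          measure_Icc_lt_top.ne
    _ = 1 := by simp

theorem setIntegral_haar {K : ℕ × ℕ} (hK : IsDyadic K) : ∫ x in Icc (0:ℝ) 1, haar K x = 0 := by
  have h1 : (1:ℝ) ≤ K.2 := by exact_mod_cast hK.1
  have h2 : (2 * K.2 : ℝ) ≤ 2 ^ (K.1 + 1) := by
    rw [pow_succ, mul_comm]; gcongr; exact_mod_cast hK.2
  have hint : ∀ a b : ℝ, Integrable ((Ico a b).indicator (1 : ℝ → ℝ))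
      (volume.restrict (Icc (0:ℝ) 1)) := fun a b =>
    (integrable_const 1).indicator measurableSet_Ico
  simp only [haar]
  rw [integral_sub (hint _ _) (hint _ _),
    setIntegral_indicator_one_of_subset_Icc measurableSet_Ico
      (Ico_div_two_pow_subset_Icc (by linarith) (by linarith)),
    setIntegral_indicator_one_of_subset_Icc measurableSet_Ico
      (Ico_div_two_pow_subset_Icc (by linarith) h2),
    Real.volume_real_Ico_of_le (by gcongr; linarith),
    Real.volume_real_Ico_of_le (by gcongr; linarith)]
  ring

theorem setIntegral_haar_sq {K : ℕ × ℕ} (hK : IsDyadic K) :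
    ∫ x in Icc (0:ℝ) 1, haar K x ^ 2 = volume.real (dyadicSet K) := by
  simp_rw [haar_sq]
  exact setIntegral_indicator_one_of_subset_Icc measurableSet_Ico (dyadicSet_subset_Icc hK)

theorem integrable_haar_mul_haar (M L : ℕ × ℕ) :
    Integrable (fun x => haar M x * haar L x) (volume.restrict (Icc (0:ℝ) 1)) :=
  .of_bound ((measurable_haar M).mul (measurable_haar L)).aestronglyMeasurable 1
    (ae_of_all _ fun x => by
      rw [norm_mul, Real.norm_eq_abs, Real.norm_eq_abs]
      exact mul_le_one₀ (abs_haar_le_one M x) (abs_nonneg _) (abs_haar_le_one L x))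

theorem setIntegral_haar_mul_haar_of_lt {M L : ℕ × ℕ} (hL : IsDyadic L) (hlt : M.1 < L.1) :
    ∫ x in Icc (0:ℝ) 1, haar M x * haar L x = 0 := by
  set c : ℝ := (L.2 - 1) / 2 ^ L.1
  have hc : c ∈ dyadicSet L := ⟨le_rfl, by simp only [c]; gcongr; linarith⟩
  -- the coarser `haar M` is constant on the support of `haar L`
  have hconst : ∀ x, haar M x * haar L x = haar M c * haar L x := fun x => by
    by_cases hx : x ∈ dyadicSet L
    · rw [haar_eq_of_floor_eq hlt ((mem_dyadicSet_iff.1 hx).trans (mem_dyadicSet_iff.1 hc).symm)]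
    · simp [haar_eq_zero_of_notMem hx]
  simp_rw [hconst]
  rw [integral_const_mul, setIntegral_haar hL, mul_zero]

theorem haar_mul_haar_of_fst_eq {M L : ℕ × ℕ} (hne : M ≠ L) (heq : M.1 = L.1) (x : ℝ) :
    haar M x * haar L x = 0 := by
  by_cases hM : x ∈ dyadicSet M
  · have hL : x ∉ dyadicSet L := fun hL => by
      have := (mem_dyadicSet_iff.1 hM).symm.trans (heq ▸ mem_dyadicSet_iff.1 hL)
      exact hne (Prod.ext heq (by omega))
    rw [haar_eq_zero_of_notMem hL, mul_zero]
  · rw [haar_eq_zero_of_notMem hM, zero_mul]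

theorem setIntegral_haar_mul_haar {M L : ℕ × ℕ} (hM : IsDyadic M) (hL : IsDyadic L) (hne : M ≠ L) :
    ∫ x in Icc (0:ℝ) 1, haar M x * haar L x = 0 := by
  rcases lt_trichotomy M.1 L.1 with hlt | heq | hgt
  · exact setIntegral_haar_mul_haar_of_lt hL hlt
  · simp [haar_mul_haar_of_fst_eq hne heq]
  · simp_rw [mul_comm (haar M _)]
    exact setIntegral_haar_mul_haar_of_lt hM hgt

theorem setIntegral_haarFn_mul_haarFn {𝒟 : Finset (ℕ × ℕ)} (h𝒟 : ∀ K ∈ 𝒟, IsDyadic K)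
    (c d : ℕ × ℕ → ℝ) :
    ∫ x in Icc (0:ℝ) 1, haarFn 𝒟 c x * haarFn 𝒟 d x
      = ∑ M ∈ 𝒟, c M * d M * volume.real (dyadicSet M) := by
  have hint : ∀ M L, Integrable (fun x => c M * d L * (haar M x * haar L x))
      (volume.restrict (Icc (0:ℝ) 1)) := fun M L => (integrable_haar_mul_haar M L).const_mul _
  simp_rw [haarFn, Finset.sum_mul_sum, mul_mul_mul_comm]
  rw [integral_finsetSum _ fun M _ => integrable_finsetSum _ fun L _ => hint M L]
  refine Finset.sum_congr rfl fun M hM => ?_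
  rw [integral_finsetSum _ fun L _ => hint M L, Finset.sum_eq_single_of_mem M hM]
  · simp_rw [integral_const_mul, ← sq, setIntegral_haar_sq (h𝒟 M hM)]
  · intro L hL hne
    rw [integral_const_mul, setIntegral_haar_mul_haar (h𝒟 M hM) (h𝒟 L hL) hne.symm, mul_zero]

/-- The squared square function `S(f)² = Σ_K c_K² h_K²` of `f = Σ_{K ∈ 𝒟} c_K h_K`. -/
noncomputable def haarSqSum (𝒟 : Finset (ℕ × ℕ)) (c : ℕ × ℕ → ℝ) (x : ℝ) : ℝ :=
  ∑ K ∈ 𝒟, (c K * haar K x) ^ 2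

section SquareFunction

variable {𝒟 B : Finset (ℕ × ℕ)} {p : ℝ}

theorem HpNorm_eq (c : ℕ × ℕ → ℝ) :
    HpNorm 𝒟 p c = (∫ x in Icc (0:ℝ) 1, haarSqSum 𝒟 c x ^ (p / 2)) ^ (1 / p) := by
  rw [HpNorm, intervalIntegral_zero_one_eq_setIntegral_Icc]; rfl

theorem haarSqSum_nonneg (c : ℕ × ℕ → ℝ) (x : ℝ) : 0 ≤ haarSqSum 𝒟 c x :=
  Finset.sum_nonneg fun _ _ => sq_nonneg _

theorem HpNorm_nonneg (𝒟 : Finset (ℕ × ℕ)) (p : ℝ) (c : ℕ × ℕ → ℝ) : 0 ≤ HpNorm 𝒟 p c :=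
  Real.rpow_nonneg (intervalIntegral.integral_nonneg zero_le_one fun x _ =>
    Real.rpow_nonneg (haarSqSum_nonneg c x) _) _

theorem integrable_haarSqSum_rpow (c : ℕ × ℕ → ℝ) {q : ℝ} (hq : 0 ≤ q) :
    Integrable (fun x => haarSqSum 𝒟 c x ^ q) (volume.restrict (Icc (0:ℝ) 1)) := by
  refine .of_bound ((Finset.measurable_sum _ fun K _ =>
    (measurable_const.mul (measurable_haar K)).pow_const 2).pow_const q).aestronglyMeasurable
    ((∑ K ∈ 𝒟, c K ^ 2) ^ q) (ae_of_all _ fun x => ?_)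
  rw [Real.norm_eq_abs, abs_of_nonneg (Real.rpow_nonneg (haarSqSum_nonneg c x) q)]
  refine Real.rpow_le_rpow (haarSqSum_nonneg c x) (Finset.sum_le_sum fun K _ => ?_) hq
  rw [mul_pow]
  exact mul_le_of_le_one_right (sq_nonneg _) ((sq_le_one_iff_abs_le_one _).2 (abs_haar_le_one K x))

theorem sum_indicator_dyadicSet_le_one (hB : (B : Set (ℕ × ℕ)).PairwiseDisjoint dyadicSet)
    (x : ℝ) : ∑ K ∈ B, (dyadicSet K).indicator 1 x ≤ (1 : ℝ) := by
  rw [← Finset.indicator_biUnion_apply B _ hB]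
  exact indicator_le_self' (fun _ _ => zero_le_one) x

theorem haarSqSum_ite_le_one (hB : (B : Set (ℕ × ℕ)).PairwiseDisjoint dyadicSet)
    {e : ℕ × ℕ → ℝ} (he : ∀ K ∈ B, |e K| ≤ 1) (x : ℝ) :
    haarSqSum 𝒟 (fun K => if K ∈ B then e K else 0) x ≤ 1 := by
  classical
  calc haarSqSum 𝒟 (fun K => if K ∈ B then e K else 0) x
      = ∑ K ∈ 𝒟 ∩ B, (e K * haar K x) ^ 2 := by
        simp_rw [haarSqSum, ite_mul, zero_mul, ite_pow, zero_pow two_ne_zero, Finset.sum_ite_mem]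
    _ ≤ ∑ K ∈ 𝒟 ∩ B, (dyadicSet K).indicator 1 x := Finset.sum_le_sum fun K hK => by
        rw [mul_pow, ← haar_sq]
        exact mul_le_of_le_one_left (sq_nonneg _)
          ((sq_le_one_iff_abs_le_one _).2 (he K (Finset.mem_inter.1 hK).2))
    _ ≤ ∑ K ∈ B, (dyadicSet K).indicator 1 x :=
        Finset.sum_le_sum_of_subset_of_nonneg Finset.inter_subset_right
          fun K _ _ => indicator_nonneg (fun _ _ => zero_le_one) x
    _ ≤ 1 := sum_indicator_dyadicSet_le_one hB x

theorem HpNorm_ite_le_one (hp : 0 < p) (hB : (B : Set (ℕ × ℕ)).PairwiseDisjoint dyadicSet)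
    {e : ℕ × ℕ → ℝ} (he : ∀ K ∈ B, |e K| ≤ 1) :
    HpNorm 𝒟 p (fun K => if K ∈ B then e K else 0) ≤ 1 := by
  rw [HpNorm_eq]
  refine Real.rpow_le_one (integral_nonneg fun x => Real.rpow_nonneg (haarSqSum_nonneg _ x) _)
    ?_ (by positivity)
  refine (integral_mono (integrable_haarSqSum_rpow _ (by positivity)) (integrable_const 1)
    fun x => ?_).trans_eq (by simp)
  exact Real.rpow_le_one (haarSqSum_nonneg _ x) (haarSqSum_ite_le_one hB he x) (by positivity)

theorem abs_haar_rpow (hp : 0 < p) (K : ℕ × ℕ) (x : ℝ) :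
    |haar K x| ^ p = (dyadicSet K).indicator 1 x := by
  by_cases hx : x ∈ dyadicSet K
  · have h1 : |haar K x| = 1 := by
      rw [← pow_eq_one_iff_of_nonneg (abs_nonneg _) two_ne_zero, sq_abs, haar_sq,
        indicator_of_mem hx]; rfl
    rw [h1, Real.one_rpow, indicator_of_mem hx]; rfl
  · rw [haar_eq_zero_of_notMem hx, indicator_of_notMem hx, abs_zero, Real.zero_rpow hp.ne']

theorem rpow_sum_sq_eq_sum_indicator (hp : 0 < p)
    (hB : (B : Set (ℕ × ℕ)).PairwiseDisjoint dyadicSet) (d : ℕ × ℕ → ℝ) (x : ℝ) :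
    (∑ K ∈ B, (d K * haar K x) ^ 2) ^ (p / 2)
      = ∑ K ∈ B, |d K| ^ p * (dyadicSet K).indicator 1 x := by
  have hdisj : (B : Set (ℕ × ℕ)).Pairwise
      fun K L => (d K * haar K x) ^ 2 * (d L * haar L x) ^ 2 = 0 :=
    fun K hK L hL hne => by
      dsimp only
      by_cases hx : x ∈ dyadicSet K
      · rw [haar_eq_zero_of_notMem fun hxL => hne (hB.elim_set hK hL x hx hxL)]; ring
      · rw [haar_eq_zero_of_notMem hx]; ring
  rw [Real.rpow_sum_of_pairwise_mul_eq_zero hdisj (by positivity)]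
  refine Finset.sum_congr rfl fun K _ => ?_
  rw [← abs_haar_rpow hp, ← Real.mul_rpow (abs_nonneg _) (abs_nonneg _), ← abs_mul, ← sq_abs,
    ← Real.rpow_natCast, ← Real.rpow_mul (abs_nonneg _)]
  norm_num [mul_div_cancel₀]

theorem setIntegral_sum_mul_indicator (hB : ∀ K ∈ B, IsDyadic K) (v : ℕ × ℕ → ℝ) :
    ∫ x in Icc (0:ℝ) 1, ∑ K ∈ B, v K * (dyadicSet K).indicator 1 x
      = ∑ K ∈ B, v K * volume.real (dyadicSet K) := by
  rw [integral_finsetSum _ fun K _ =>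
    ((integrable_const 1).indicator measurableSet_Ico).const_mul _]
  exact Finset.sum_congr rfl fun K hK => by
    rw [integral_const_mul, setIntegral_indicator_one_of_subset_Icc (s := dyadicSet K)
      measurableSet_Ico (dyadicSet_subset_Icc (hB K hK))]

theorem HpNorm_rpow (hp : 0 < p) (c : ℕ × ℕ → ℝ) :
    HpNorm 𝒟 p c ^ p = ∫ x in Icc (0:ℝ) 1, haarSqSum 𝒟 c x ^ (p / 2) := by
  rw [HpNorm_eq, one_div, Real.rpow_inv_rpow (integral_nonneg fun x =>
    Real.rpow_nonneg (haarSqSum_nonneg c x) _) hp.ne']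

theorem HpNorm_ite (hp : 0 < p) (h𝒟 : ∀ K ∈ 𝒟, IsDyadic K) (hB𝒟 : B ⊆ 𝒟)
    (hB : (B : Set (ℕ × ℕ)).PairwiseDisjoint dyadicSet) (a : ℕ × ℕ → ℝ) :
    HpNorm 𝒟 p (fun K => if K ∈ B then a K else 0)
      = (∑ K ∈ B, |a K| ^ p * volume.real (dyadicSet K)) ^ (1 / p) := by
  classical
  have hsq : ∀ x, haarSqSum 𝒟 (fun K => if K ∈ B then a K else 0) x
      = ∑ K ∈ B, (a K * haar K x) ^ 2 := fun x => by
    simp_rw [haarSqSum, ite_mul, zero_mul, ite_pow, zero_pow two_ne_zero, Finset.sum_ite_mem,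
      Finset.inter_eq_right.2 hB𝒟]
  simp_rw [HpNorm_eq, hsq, rpow_sum_sq_eq_sum_indicator hp hB]
  rw [setIntegral_sum_mul_indicator fun K hK => h𝒟 K (hB𝒟 hK)]

theorem sum_rpow_mul_le_HpNorm_rpow (hp : 0 < p) (h𝒟 : ∀ K ∈ 𝒟, IsDyadic K) (hB𝒟 : B ⊆ 𝒟)
    (hB : (B : Set (ℕ × ℕ)).PairwiseDisjoint dyadicSet) (d : ℕ × ℕ → ℝ) :
    ∑ K ∈ B, |d K| ^ p * volume.real (dyadicSet K) ≤ HpNorm 𝒟 p d ^ p := by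
  rw [HpNorm_rpow hp, ← setIntegral_sum_mul_indicator fun K hK => h𝒟 K (hB𝒟 hK)]
  simp_rw [← rpow_sum_sq_eq_sum_indicator hp hB]
  refine integral_mono (integrable_haarSqSum_rpow (𝒟 := B) d (by positivity))
    (integrable_haarSqSum_rpow d (by positivity)) fun x => ?_
  exact Real.rpow_le_rpow (haarSqSum_nonneg d x)
    (Finset.sum_le_sum_of_subset_of_nonneg hB𝒟 fun _ _ _ => sq_nonneg _) (by positivity)

theorem sum_mul_mul_le_HpNorm (hp : 1 ≤ p) (h𝒟 : ∀ K ∈ 𝒟, IsDyadic K) (d e : ℕ × ℕ → ℝ)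
    (he : ∀ x, haarSqSum 𝒟 e x ≤ 1) :
    ∑ K ∈ 𝒟, d K * e K * volume.real (dyadicSet K) ≤ HpNorm 𝒟 p d := by
  have hsum : ∑ K ∈ 𝒟, d K * e K * volume.real (dyadicSet K)
      = ∫ x in Icc (0:ℝ) 1, ∑ K ∈ 𝒟, d K * haar K x * (e K * haar K x) := by
    rw [integral_finsetSum _ fun K _ => by
      simpa only [mul_mul_mul_comm] using (integrable_haar_mul_haar K K).const_mul (d K * e K)]
    refine Finset.sum_congr rfl fun K hK => ?_
    simp_rw [mul_mul_mul_comm, integral_const_mul, ← sq, setIntegral_haar_sq (h𝒟 K hK)]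
  have hCS : ∀ x, ∑ K ∈ 𝒟, d K * haar K x * (e K * haar K x) ≤ haarSqSum 𝒟 d x ^ (1 / 2 : ℝ) :=
    fun x => by
      refine (Real.sum_mul_le_sqrt_mul_sqrt _ _ _).trans ?_
      rw [← Real.sqrt_eq_rpow]
      exact mul_le_of_le_one_right (Real.sqrt_nonneg _) (Real.sqrt_le_one.2 (he x))
  rw [hsum, HpNorm_eq]
  refine (integral_mono (integrable_finsetSum _ fun K _ => ?_)
    (integrable_haarSqSum_rpow d (by norm_num)) hCS).trans ?_
  · simpa only [mul_mul_mul_comm] using (integrable_haar_mul_haar K K).const_mul (d K * e K)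
  refine (integral_le_rpow_integral_rpow hp (fun x => Real.rpow_nonneg (haarSqSum_nonneg d x) _)
    (integrable_haarSqSum_rpow d (by norm_num)) ?_).trans_eq ?_
  all_goals simp_rw [← Real.rpow_mul (haarSqSum_nonneg d _), one_div_mul_eq_div]
  exact integrable_haarSqSum_rpow d (by positivity)

end SquareFunction

section Operator

variable {𝒟 B B' : Finset (ℕ × ℕ)} {p C β : ℝ} {T : (ℕ × ℕ → ℝ) →ₗ[ℝ] (ℕ × ℕ → ℝ)}

theorem apply_ite_eq_sum (B : Finset (ℕ × ℕ)) (b : ℕ × ℕ → ℝ) (J : ℕ × ℕ) :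
    T (fun K => if K ∈ B then b K else 0) J = ∑ i ∈ B, b i * T (Pi.single i 1) J := by
  have h : (fun K => if K ∈ B then b K else 0) = ∑ i ∈ B, b i • Pi.single i (1 : ℝ) := by
    ext K
    simp [Finset.sum_apply, Pi.single_apply]
  rw [h, map_sum, Finset.sum_apply]
  simp only [map_smul, Pi.smul_apply, smul_eq_mul]

theorem setIntegral_haarFn_apply_ite_mul_haarFn_ite (h𝒟 : ∀ K ∈ 𝒟, IsDyadic K)
    (hB'𝒟 : B' ⊆ 𝒟) (b : ℕ × ℕ → ℝ) :
    ∫ x in Icc (0:ℝ) 1, haarFn 𝒟 (T (fun K => if K ∈ B then b K else 0)) x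
        * haarFn 𝒟 (fun K => if K ∈ B' then b K else 0) x
      = ∑ i ∈ B, ∑ J ∈ B', b i * b J * (T (Pi.single i 1) J * volume.real (dyadicSet J)) := by
  classical
  rw [setIntegral_haarFn_mul_haarFn h𝒟]
  simp_rw [mul_ite, mul_zero, ite_mul, zero_mul]
  rw [Finset.sum_ite_mem, Finset.inter_eq_right.2 hB'𝒟]
  simp_rw [apply_ite_eq_sum, Finset.sum_mul]
  rw [Finset.sum_comm]
  exact Finset.sum_congr rfl fun i _ => Finset.sum_congr rfl fun J _ => by ring

theorem sum_sq_sum_sign_le_of_two_le (hp : 2 ≤ p) (hC : 0 ≤ C) (hβ : 0 ≤ β)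
    (h𝒟 : ∀ K ∈ 𝒟, IsDyadic K) (hT : ∀ c, HpNorm 𝒟 p (T c) ≤ C * HpNorm 𝒟 p c)
    (hB : (B : Set (ℕ × ℕ)).PairwiseDisjoint dyadicSet) (hB'𝒟 : B' ⊆ 𝒟)
    (hB' : (B' : Set (ℕ × ℕ)).PairwiseDisjoint dyadicSet)
    (hβB' : ∀ J ∈ B', volume.real (dyadicSet J) ≤ β) {ε : ℕ × ℕ → ℝ} (hε : ∀ i ∈ B, |ε i| ≤ 1) :
    ∑ J ∈ B', (∑ i ∈ B, ε i * (T (Pi.single i 1) J * volume.real (dyadicSet J))) ^ 2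
      ≤ C ^ 2 * β := by
  set c : ℕ × ℕ → ℝ := fun K => if K ∈ B then ε K else 0
  have hTc : ∀ J, ∑ i ∈ B, ε i * (T (Pi.single i 1) J * volume.real (dyadicSet J))
      = T c J * volume.real (dyadicSet J) := fun J => by
    simp_rw [c, apply_ite_eq_sum, Finset.sum_mul, mul_assoc]
  calc ∑ J ∈ B', (∑ i ∈ B, ε i * (T (Pi.single i 1) J * volume.real (dyadicSet J))) ^ 2
      = ∑ J ∈ B', (T c J * volume.real (dyadicSet J)) ^ 2 := by simp_rw [hTc]
    _ ≤ β * (∑ J ∈ B', |T c J| ^ p * volume.real (dyadicSet J)) ^ (2 / p) :=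
        sum_sq_mul_le_of_two_le hp hβ (fun _ => measureReal_nonneg) hβB'
          (sum_volume_real_dyadicSet_le_one (fun J hJ => h𝒟 J (hB'𝒟 hJ)) hB') _
    _ ≤ β * (HpNorm 𝒟 p (T c) ^ p) ^ (2 / p) := by
        gcongr
        exact sum_rpow_mul_le_HpNorm_rpow (by linarith) h𝒟 hB'𝒟 hB' _
    _ = β * HpNorm 𝒟 p (T c) ^ 2 := by
        rw [← Real.rpow_mul (HpNorm_nonneg _ _ _), mul_div_cancel₀ _ (by linarith), Real.rpow_two]
    _ ≤ β * (C * 1) ^ 2 := by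
        gcongr
        · exact HpNorm_nonneg _ _ _
        · exact (hT c).trans (mul_le_mul_of_nonneg_left (HpNorm_ite_le_one (by linarith) hB hε) hC)
    _ = C ^ 2 * β := by ring

theorem sum_sq_sum_sign_le_of_le_two (hp1 : 1 ≤ p) (hp : p ≤ 2) (hC : 0 ≤ C) (hβ : 0 ≤ β)
    (h𝒟 : ∀ K ∈ 𝒟, IsDyadic K) (hT : ∀ c, HpNorm 𝒟 p (T c) ≤ C * HpNorm 𝒟 p c)
    (hB𝒟 : B ⊆ 𝒟) (hB : (B : Set (ℕ × ℕ)).PairwiseDisjoint dyadicSet) (hB'𝒟 : B' ⊆ 𝒟)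
    (hB' : (B' : Set (ℕ × ℕ)).PairwiseDisjoint dyadicSet)
    (hβB : ∀ i ∈ B, volume.real (dyadicSet i) ≤ β) {η : ℕ × ℕ → ℝ} (hη : ∀ J ∈ B', |η J| ≤ 1) :
    ∑ i ∈ B, (∑ J ∈ B', η J * (T (Pi.single i 1) J * volume.real (dyadicSet J))) ^ 2
      ≤ C ^ 2 * β := by
  classical
  set A : ℕ × ℕ → ℝ := fun i => ∑ J ∈ B', η J * (T (Pi.single i 1) J * volume.real (dyadicSet J))
  set a : ℕ × ℕ → ℝ := fun K => if K ∈ B then A K else 0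
  set e : ℕ × ℕ → ℝ := fun K => if K ∈ B' then η K else 0
  -- `Σ A_i² = ⟨T a, e⟩`, where `a = Σ A_i h_i` and `e` is the signed sum over `B'`
  have hpair : ∑ i ∈ B, A i ^ 2 = ∑ M ∈ 𝒟, T a M * e M * volume.real (dyadicSet M) := by
    simp_rw [a, e, apply_ite_eq_sum, mul_ite, mul_zero, ite_mul, zero_mul]
    rw [Finset.sum_ite_mem, Finset.inter_eq_right.2 hB'𝒟]
    simp_rw [Finset.sum_mul]
    rw [Finset.sum_comm]
    refine Finset.sum_congr rfl fun i _ => ?_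
    simp_rw [sq, A, Finset.mul_sum]
    exact Finset.sum_congr rfl fun J _ => by ring
  have hs0 : 0 ≤ ∑ i ∈ B, A i ^ 2 := Finset.sum_nonneg fun i _ => sq_nonneg _
  refine le_sq_mul_of_le_mul_sqrt hs0 hβ ?_
  calc ∑ i ∈ B, A i ^ 2 ≤ HpNorm 𝒟 p (T a) := hpair ▸ sum_mul_mul_le_HpNorm hp1 h𝒟 _ _
        (haarSqSum_ite_le_one hB' hη)
    _ ≤ C * HpNorm 𝒟 p a := hT a
    _ = C * (∑ i ∈ B, |A i| ^ p * volume.real (dyadicSet i)) ^ (1 / p) := by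
        rw [HpNorm_ite (by linarith) h𝒟 hB𝒟 hB]
    _ ≤ C * ((β * ∑ i ∈ B, A i ^ 2) ^ (p / 2)) ^ (1 / p) := by
        gcongr
        exact sum_rpow_mul_le_of_le_two (by linarith) hp (fun _ => measureReal_nonneg) hβB
          (sum_volume_real_dyadicSet_le_one (fun i hi => h𝒟 i (hB𝒟 hi)) hB) A
    _ = C * √(β * ∑ i ∈ B, A i ^ 2) := by
        rw [← Real.rpow_mul (by positivity), Real.sqrt_eq_rpow]
        congr 2
        field_simp

end Operator

/-- Let `T` be a linear operator on the Haar span (acting on coefficient vectors over a finite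
dyadic index set `𝒟`) with `H^p` operator norm at most `C` (`1 ≤ p < ∞`). Let `B_I, B_{I'} ⊆ 𝒟`
be disjoint collections of pairwise disjoint dyadic intervals, each interval of measure at most
`α`. For independent Rademacher signs `θ`, set `b_I^θ = Σ_{K∈B_I} θ_K h_K` and
`Y(θ) = ⟨T b_I^θ, b_{I'}^θ⟩ = ∫₀¹ (T b_I^θ)(x) b_{I'}^θ(x) dx`. Then `E[Y²] ≤ C² α^{1/2}`. -/
theorem offdiagonal_second_moment {Ω : Type*} [MeasurableSpace Ω]
    (P : Measure Ω) [IsProbabilityMeasure P]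
    (θ : ℕ × ℕ → Ω → ℝ) (hmeas : ∀ K, Measurable (θ K))
    (hindep : iIndepFun θ P)
    (hlaw : ∀ K, Measure.map (θ K) P
      = (2⁻¹ : ENNReal) • Measure.dirac (1 : ℝ) + (2⁻¹ : ENNReal) • Measure.dirac (-1 : ℝ))
    (𝒟 : Finset (ℕ × ℕ)) (h𝒟 : ∀ K ∈ 𝒟, IsDyadic K)
    (p : ℝ) (hp : 1 ≤ p)
    (T : ((ℕ × ℕ) → ℝ) →ₗ[ℝ] ((ℕ × ℕ) → ℝ)) (C : ℝ) (hC : 0 ≤ C)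
    (hT : ∀ c, HpNorm 𝒟 p (T c) ≤ C * HpNorm 𝒟 p c)
    (BI BI' : Finset (ℕ × ℕ)) (hBI : BI ⊆ 𝒟) (hBI' : BI' ⊆ 𝒟)
    (hdisjColl : Disjoint BI BI')
    (hdisjI : (BI : Set (ℕ × ℕ)).Pairwise fun K L => Disjoint (dyadicSet K) (dyadicSet L))
    (hdisjI' : (BI' : Set (ℕ × ℕ)).Pairwise fun K L => Disjoint (dyadicSet K) (dyadicSet L))
    (α : ℝ) (hα : 0 ≤ α)
    (hsmall : ∀ K ∈ BI ∪ BI', (volume (dyadicSet K)).toReal ≤ α) :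
    (∫ ω, (∫ x in (0:ℝ)..1,
        haarFn 𝒟 (T (fun K => if K ∈ BI then θ K ω else 0)) x
          * haarFn 𝒟 (fun K => if K ∈ BI' then θ K ω else 0) x) ^ 2 ∂P)
      ≤ C ^ 2 * α ^ ((1:ℝ)/2) := by
  have hsign := fun K => ae_eq_one_or_eq_neg_one_of_map_eq (hmeas K) (hlaw K)
  have hmean := fun K => integral_eq_zero_of_map_eq (hmeas K) (hlaw K)
  have hβ : ∀ K ∈ BI ∪ BI', volume.real (dyadicSet K) ≤ min α 1 := fun K hK =>
    le_min (hsmall K hK) (volume_real_dyadicSet_le_one (h𝒟 K (Finset.union_subset hBI hBI' hK)))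
  have hβ0 : 0 ≤ min α 1 := le_min hα zero_le_one
  simp_rw [intervalIntegral_zero_one_eq_setIntegral_Icc,
    setIntegral_haarFn_apply_ite_mul_haarFn_ite h𝒟 hBI']
  rw [integral_sq_sum_sum_mul_mul_of_iIndepFun hmeas hindep hsign hmean hdisjColl]
  calc _ ≤ C ^ 2 * min α 1 := by
        rcases le_total p 2 with hp2 | hp2
        · exact sum_sum_sq_le_of_forall_abs_le_one hmeas hindep hsign hmean BI BI' _
            fun η hη => sum_sq_sum_sign_le_of_le_two hp hp2 hC hβ0 h𝒟 hT hBI hdisjI hBI' hdisjI'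
              (fun i hi => hβ i (Finset.mem_union_left _ hi)) hη
        · rw [Finset.sum_comm]
          exact sum_sum_sq_le_of_forall_abs_le_one hmeas hindep hsign hmean BI' BI
            (fun J i => T (Pi.single i 1) J * volume.real (dyadicSet J))
            fun ε hε => sum_sq_sum_sign_le_of_two_le hp2 hC hβ0 h𝒟 hT hdisjI hBI' hdisjI'
              (fun J hJ => hβ J (Finset.mem_union_right _ hJ)) hε
    _ ≤ C ^ 2 * α ^ ((1:ℝ) / 2) := by
        rw [← Real.sqrt_eq_rpow]
        gcongr
        exact min_one_le_sqrt hα
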